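/- arXiv:2408.03686 — 6 statements merged into one kernel-verified Lean document; each statement's English description precedes it below -/
import Mathlib

section
/- Every positive compact operator T from a normed lattice E to a normed lattice F is quasi-c-σ-Levi: for every norm-bounded increasing sequence (x_n) in E_+, the sequence (Tx_n) is order convergent in F. -/
/-- `p ↓ 0` : `p` is decreasing with infimum `0`. -/
def DownToZero {F : Type*} [Lattice F] [AddCommGroup F] (p : ℕ → F) : Prop :=
  Antitone p ∧ IsGLB (Set.range p) 0

/-- order convergence of a sequence to a point. -/
def OrderConvTo {F : Type*} [Lattice F] [AddCommGroup F] (y : ℕ → F) (l : F) : Prop :=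
  ∃ p : ℕ → F, DownToZero p ∧ ∀ n, |y n - l| ≤ p n

/-!
A bounded sequence is mapped into a dilate of the relatively compact set `T(B_E)`, so some
subsequence of `(T x_n)` converges in norm to a point `y`. Positivity of `T` makes `(T x_n)`
increasing, and since the order of a normed lattice is closed, `y` is its supremum. Then
`p_n = y - T x_n ↓ 0` witnesses the order convergence of `(T x_n)` to `y`.
-/

open Set Filter Topology Metric Pointwise

theorem LinearMap.isCompact_closure_image_closedBall {E F : Type*}
    [NormedAddCommGroup E] [NormedSpace ℝ E] [NormedAddCommGroup F] [NormedSpace ℝ F]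
    (T : E →ₗ[ℝ] F) (hT : IsCompact (closure (T '' closedBall 0 1))) {r : ℝ} (hr : 0 ≤ r) :
    IsCompact (closure (T '' closedBall 0 r)) := by
  have hball : closedBall (0 : E) r = r • closedBall (0 : E) 1 := by
    rw [smul_closedBall r 0 zero_le_one, smul_zero, Real.norm_of_nonneg hr, mul_one]
  rw [hball, image_smul_set, closure_smul₀]
  exact hT.smul r

theorem Monotone.isLUB_range_of_tendsto_comp {α : Type*} [Preorder α] [TopologicalSpace α]
    [OrderClosedTopology α] {f : ℕ → α} (hf : Monotone f) {φ : ℕ → ℕ} (hφ : StrictMono φ)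
    {a : α} (h : Tendsto (f ∘ φ) atTop (𝓝 a)) : IsLUB (range f) a := by
  refine ⟨?_, fun b hb => le_of_tendsto' h fun k => hb (mem_range_self _)⟩
  rintro _ ⟨n, rfl⟩
  exact (hf hφ.le_apply).trans ((hf.comp hφ.monotone).ge_of_tendsto h n)

section OrderedGroup

variable {α : Type*} [Lattice α] [AddCommGroup α] [IsOrderedAddMonoid α] {f : ℕ → α} {a : α}

theorem Monotone.downToZero_sub_of_isLUB (hf : Monotone f) (ha : IsLUB (range f) a) :
    DownToZero fun n => a - f n := by
  refine ⟨fun m n hmn => sub_le_sub_left (hf hmn) a, ?_, fun c hc => ?_⟩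
  · rintro _ ⟨n, rfl⟩
    exact sub_nonneg.2 (ha.1 (mem_range_self n))
  · have hle : a ≤ a - c := ha.2 (by
      rintro _ ⟨n, rfl⟩
      exact le_sub_comm.1 (hc (mem_range_self n)))
    exact (le_sub_self_iff a).1 hle

theorem Monotone.orderConvTo_of_isLUB (hf : Monotone f) (ha : IsLUB (range f) a) :
    OrderConvTo f a :=
  ⟨_, hf.downToZero_sub_of_isLUB ha, fun n => by
    rw [abs_sub_comm, abs_of_nonneg (sub_nonneg.2 (ha.1 (mem_range_self n)))]⟩

end OrderedGroup

theorem positive_compact_is_quasi_c_sigma_Levi_general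
    {E F : Type*} [NormedAddCommGroup E] [Lattice E] [IsOrderedAddMonoid E]
    [NormedSpace ℝ E]
    [NormedAddCommGroup F] [Lattice F] [HasSolidNorm F] [IsOrderedAddMonoid F]
    [NormedSpace ℝ F]
    (T : E →ₗ[ℝ] F)
    (hpos : ∀ x : E, 0 ≤ x → 0 ≤ T x)
    (hcomp : IsCompact (closure (T '' Metric.closedBall 0 1)))
    (x : ℕ → E) (hmono : Monotone x)
    (hbdd : ∃ M : ℝ, ∀ n, ‖x n‖ ≤ M) :
    ∃ y : F, OrderConvTo (fun n => T (x n)) y := by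
  obtain ⟨M, hM⟩ := hbdd
  have hK := T.isCompact_closure_image_closedBall hcomp ((norm_nonneg _).trans (hM 0))
  have hmem (n : ℕ) : T (x n) ∈ closure (T '' closedBall 0 M) :=
    subset_closure (mem_image_of_mem T (mem_closedBall_zero_iff.2 (hM n)))
  obtain ⟨y, -, φ, hφ, hlim⟩ := hK.tendsto_subseq hmem
  have hTx : Monotone fun n => T (x n) := fun m n hmn => by
    simpa only [map_sub, sub_nonneg] using hpos _ (sub_nonneg.2 (hmono hmn))
  exact ⟨y, hTx.orderConvTo_of_isLUB (hTx.isLUB_range_of_tendsto_comp hφ hlim)⟩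

/-- every positive compact operator between normed lattices is
quasi-c-σ-Levi. -/
theorem positive_compact_is_quasi_c_sigma_Levi
    {E F : Type*} [NormedAddCommGroup E] [Lattice E] [HasSolidNorm E] [IsOrderedAddMonoid E]
    [NormedSpace ℝ E]
    [NormedAddCommGroup F] [Lattice F] [HasSolidNorm F] [IsOrderedAddMonoid F]
    [NormedSpace ℝ F]
    (T : E →ₗ[ℝ] F)
    (hpos : ∀ x : E, 0 ≤ x → 0 ≤ T x)
    (hcomp : IsCompact (closure (T '' Metric.closedBall 0 1)))
    (x : ℕ → E) (hmono : Monotone x) (hxpos : ∀ n, 0 ≤ x n)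
    (hbdd : ∃ M : ℝ, ∀ n, ‖x n‖ ≤ M) :
    ∃ y : F, OrderConvTo (fun n => T (x n)) y :=
  positive_compact_is_quasi_c_sigma_Levi_general T hpos hcomp x hmono hbdd
end

section
/- The operator T on E = C[0,1] ⊕ L¹[0,1] defined by T(φ, ψ) = (0, φ) is positive and quasi-c-σ-Levi, but not σ-Levi: there is a norm-bounded increasing sequence (f_n) in E_+ such that (Tf_n) order-converges to an element not in the range of T restricted to {Tx : x ∈ E}. -/
/-!
`T` only sees the continuous component and places it in `L¹`. A bounded increasing sequence of
continuous functions converges pointwise to a bounded measurable function, an increasing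
sequence in `L¹` converging a.e. has its limit as supremum, and an increasing sequence with a
supremum order-converges to it: so `T` is quasi-c-σ-Levi. The ramps `φ_n` increase to the
indicator of `[0, 1/2)`, whose `L¹` class has a jump at `1/2` and therefore no continuous
representative: it is not of the form `T z`, and since order limits are unique, `T` is not σ-Levi.
-/

open MeasureTheory

/-- The space `E = C[0,1] ⊕ L¹[0,1]` with componentwise order. -/
noncomputable abbrev Espace : Type :=
  C(Set.Icc (0:ℝ) 1, ℝ) × Lp ℝ 1 (volume : Measure (Set.Icc (0:ℝ) 1))

/-- Inclusion of `C[0,1]` into `L¹[0,1]`. -/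
noncomputable def Jincl : C(Set.Icc (0:ℝ) 1, ℝ) →L[ℝ]
    Lp ℝ 1 (volume : Measure (Set.Icc (0:ℝ) 1)) :=
  ContinuousMap.toLp 1 volume ℝ

/-- `T` is σ-Levi. -/
def SigmaLevi (T : Espace →ₗ[ℝ] Espace) : Prop :=
  ∀ x : ℕ → Espace, Monotone x → (∀ n, 0 ≤ x n) → (∃ M : ℝ, ∀ n, ‖x n‖ ≤ M) →
    ∃ z : Espace, OrderConvTo (fun n => T (x n)) (T z)

/-- `T` is quasi-c-σ-Levi. -/
def QuasiCSigmaLevi (T : Espace →ₗ[ℝ] Espace) : Prop :=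
  ∀ x : ℕ → Espace, Monotone x → (∀ n, 0 ≤ x n) → (∃ M : ℝ, ∀ n, ‖x n‖ ≤ M) →
    ∃ y : Espace, OrderConvTo (fun n => T (x n)) y

open Set Filter Topology
open scoped unitInterval ENNReal

section OrderConvergence

variable {F : Type*} [Lattice F] [AddCommGroup F] [AddLeftMono F] {y : ℕ → F} {l l' : F}

theorem OrderConvTo.unique (h : OrderConvTo y l) (h' : OrderConvTo y l') : l = l' := by
  obtain ⟨p, ⟨hp_anti, hp_glb⟩, hp⟩ := h
  obtain ⟨q, ⟨hq_anti, hq_glb⟩, hq⟩ := h'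
  have key (n m : ℕ) : |l - l'| ≤ p n + q m := by
    set k := max n m
    calc |l - l'| = |(l - y k) + (y k - l')| := by rw [sub_add_sub_cancel]
      _ ≤ |y k - l| + |y k - l'| := abs_sub_comm (y k) l ▸ abs_add_le _ _
      _ ≤ p k + q k := add_le_add (hp k) (hq k)
      _ ≤ p n + q m := add_le_add (hp_anti (le_max_left n m)) (hq_anti (le_max_right n m))
  have hp_bound (n : ℕ) : |l - l'| ≤ p n :=
    sub_nonpos.1 <| hq_glb.2 <| by
      rintro _ ⟨m, rfl⟩
      exact sub_le_iff_le_add'.2 (key n m)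
  have habs : |l - l'| ≤ 0 := hp_glb.2 <| by rintro _ ⟨n, rfl⟩; exact hp_bound n
  refine sub_eq_zero.1 (le_antisymm ((le_abs_self _).trans habs) ?_)
  exact neg_nonpos.1 ((neg_le_abs _).trans habs)

theorem Monotone.orderConvTo_of_isLUB_s3 (hy : Monotone y) (hl : IsLUB (range y) l) :
    OrderConvTo y l := by
  have hle (n : ℕ) : y n ≤ l := hl.1 ⟨n, rfl⟩
  refine ⟨fun n => l - y n, ⟨fun n m hnm => sub_le_sub_left (hy hnm) l, ?_, ?_⟩, fun n => ?_⟩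
  · rintro _ ⟨n, rfl⟩
    exact sub_nonneg.2 (hle n)
  · intro b hb
    have : l ≤ l - b := hl.2 <| by
      rintro _ ⟨n, rfl⟩
      exact le_sub_comm.1 (hb ⟨n, rfl⟩)
    exact (le_sub_self_iff l).1 this
  · rw [abs_sub_comm, abs_of_nonneg (sub_nonneg.2 (hle n))]

end OrderConvergence

theorem isLUB_range_prodMk_const {α β : Type*} [Preorder α] [Preorder β] (a : α) {u : ℕ → β}
    {v : β} (hv : IsLUB (range u) v) : IsLUB (range fun n => (a, u n)) (a, v) := by
  refine isLUB_prod.2 ⟨?_, ?_⟩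
  · simp [← range_comp, Function.comp_def]
  · simpa [← range_comp, Function.comp_def] using hv

namespace MeasureTheory.Lp

variable {X : Type*} [MeasurableSpace X] {μ : Measure X} {p : ℝ≥0∞}

theorem isLUB_range_of_monotone_of_ae_tendsto {u : ℕ → Lp ℝ p μ} {v : Lp ℝ p μ}
    (hu : Monotone u) (hv : ∀ᵐ t ∂μ, Tendsto (fun n => u n t) atTop (𝓝 (v t))) :
    IsLUB (range u) v := by
  have hu_ae : ∀ᵐ t ∂μ, Monotone fun n => u n t := by
    have := ae_all_iff.2 fun n => (coeFn_le _ _).2 (hu (Nat.le_succ n))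
    filter_upwards [this] with t ht using monotone_nat_of_le_succ ht
  refine ⟨?_, fun b hb => ?_⟩
  · rintro _ ⟨n, rfl⟩
    refine (coeFn_le _ _).1 ?_
    filter_upwards [hu_ae, hv] with t hmono hlim using hmono.ge_of_tendsto hlim n
  · refine (coeFn_le _ _).1 ?_
    have := ae_all_iff.2 fun n => (coeFn_le _ _).2 (hb ⟨n, rfl⟩)
    filter_upwards [this, hv] with t hbt hlim using le_of_tendsto' hlim hbt

end MeasureTheory.Lp

theorem exists_Lp_ae_tendsto_of_monotone {X : Type*} [MeasurableSpace X] {μ : Measure X}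
    [IsFiniteMeasure μ] {p : ℝ≥0∞} {f : ℕ → X → ℝ} (hf_meas : ∀ n, Measurable (f n))
    (hf : ∀ t, Monotone fun n => f n t) {M : ℝ} (hM : ∀ n t, |f n t| ≤ M) :
    ∃ v : Lp ℝ p μ, ∀ᵐ t ∂μ, Tendsto (fun n => f n t) atTop (𝓝 (v t)) := by
  have hbdd (t : X) : BddAbove (range fun n => f n t) :=
    ⟨M, by rintro _ ⟨n, rfl⟩; exact (le_abs_self _).trans (hM n t)⟩
  set g : X → ℝ := fun t => ⨆ n, f n t
  have hlim (t : X) : Tendsto (fun n => f n t) atTop (𝓝 (g t)) :=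
    tendsto_atTop_ciSup (hf t) (hbdd t)
  have hg_meas : Measurable g :=
    measurable_of_tendsto_metrizable' atTop hf_meas (tendsto_pi_nhds.2 hlim)
  have hg_bound (t : X) : |g t| ≤ M :=
    abs_le.2 ⟨(abs_le.1 (hM 0 t)).1.trans (le_ciSup (hbdd t) 0),
      ciSup_le fun n => (abs_le.1 (hM n t)).2⟩
  have hg : MemLp g p μ :=
    MemLp.of_bound hg_meas.aestronglyMeasurable M (ae_of_all _ hg_bound)
  refine ⟨hg.toLp g, ?_⟩
  filter_upwards [hg.coeFn_toLp] with t ht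
  rw [ht]
  exact hlim t

theorem Continuous.eqOn_Icc_of_ae_eq_const {Y : Type*} [TopologicalSpace Y] [T2Space Y]
    {g : ℝ → Y} (hg : Continuous g) {a b : ℝ} (hab : a < b) {y : Y}
    (h : ∀ᵐ t ∂volume.restrict (Ioo a b), g t = y) : EqOn g (fun _ => y) (Icc a b) := by
  rw [← closure_Ioo hab.ne]
  exact (Measure.eqOn_open_of_ae_eq h isOpen_Ioo hg.continuousOn continuousOn_const).closure
    hg continuous_const

theorem Continuous.not_ae_eq_indicator_Iio {g : ℝ → ℝ} (hg : Continuous g) {a x b : ℝ}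
    (hax : a < x) (hxb : x < b) : ¬ g =ᵐ[volume.restrict (Ioo a b)] (Iio x).indicator 1 := by
  intro h
  have h_left : ∀ᵐ t ∂volume.restrict (Ioo a x), g t = 1 := by
    filter_upwards [ae_restrict_of_ae_restrict_of_subset (Ioo_subset_Ioo_right hxb.le) h,
      ae_restrict_mem measurableSet_Ioo] with t ht hmem
    rw [ht, indicator_of_mem (mem_Iio.2 hmem.2), Pi.one_apply]
  have h_right : ∀ᵐ t ∂volume.restrict (Ioo x b), g t = 0 := by
    filter_upwards [ae_restrict_of_ae_restrict_of_subset (Ioo_subset_Ioo_left hax.le) h,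
      ae_restrict_mem measurableSet_Ioo] with t ht hmem
    rw [ht, indicator_of_notMem (notMem_Iio.2 hmem.1.le)]
  have h1 : g x = 1 := hg.eqOn_Icc_of_ae_eq_const hax h_left ⟨hax.le, le_rfl⟩
  have h0 : g x = 0 := hg.eqOn_Icc_of_ae_eq_const hxb h_right ⟨le_rfl, hxb.le⟩
  exact one_ne_zero (h1.symm.trans h0)

theorem ContinuousMap.not_ae_eq_indicator_Iio (c : C(I, ℝ)) {x : ℝ} (hx : x ∈ Ioo 0 1) :
    ¬ ⇑c =ᵐ[volume] fun t => (Iio x).indicator 1 (t : ℝ) := by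
  intro hc
  have h_ext : ∀ᵐ t ∂volume.restrict I, IccExtend zero_le_one c t = (Iio x).indicator 1 t := by
    refine unitInterval.measurePreserving_coe.map_eq ▸
      unitInterval.measurableEmbedding_coe.ae_map_iff.2 ?_
    filter_upwards [hc] with t ht
    exact (IccExtend_val _ c t).trans ht
  exact c.continuous.Icc_extend'.not_ae_eq_indicator_Iio hx.1 hx.2
    (ae_restrict_of_ae_restrict_of_subset Ioo_subset_Icc_self h_ext)

-- `ramp n` is `1` on `[0, 1/2 - 2⁻ⁿ]`, `0` on `[1/2, 1]` and affine in between.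
noncomputable def ramp (n : ℕ) (t : ℝ) : ℝ := min 1 (max 0 ((1 / 2 - t) * 2 ^ n))

theorem continuous_ramp (n : ℕ) : Continuous (ramp n) := by
  unfold ramp
  fun_prop

theorem ramp_nonneg (n : ℕ) (t : ℝ) : 0 ≤ ramp n t := le_min zero_le_one (le_max_left _ _)

theorem ramp_le_one (n : ℕ) (t : ℝ) : ramp n t ≤ 1 := min_le_left _ _

theorem ramp_of_half_le {t : ℝ} (ht : 1 / 2 ≤ t) (n : ℕ) : ramp n t = 0 := by
  have : (1 / 2 - t) * 2 ^ n ≤ 0 := mul_nonpos_of_nonpos_of_nonneg (by linarith) (by positivity)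
  rw [ramp, max_eq_left this, min_eq_right zero_le_one]

theorem monotone_ramp (t : ℝ) : Monotone fun n => ramp n t := by
  intro n m hnm
  rcases lt_or_ge t (1 / 2) with ht | ht
  · refine min_le_min le_rfl (max_le_max le_rfl ?_)
    exact mul_le_mul_of_nonneg_left (pow_le_pow_right₀ one_le_two hnm) (by linarith)
  · simp only [ramp_of_half_le ht, le_refl]

theorem tendsto_ramp (t : ℝ) :
    Tendsto (fun n => ramp n t) atTop (𝓝 ((Iio (1 / 2)).indicator 1 t)) := by
  rcases lt_or_ge t (1 / 2) with ht | ht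
  · have h_top : Tendsto (fun n : ℕ => (1 / 2 - t) * 2 ^ n) atTop atTop :=
      (tendsto_pow_atTop_atTop_of_one_lt one_lt_two).const_mul_atTop (by linarith)
    rw [indicator_of_mem (mem_Iio.2 ht), Pi.one_apply]
    refine tendsto_const_nhds.congr' ?_
    filter_upwards [h_top.eventually_ge_atTop 1] with n hn
    rw [ramp, max_eq_right (zero_le_one.trans hn), min_eq_left hn]
  · simp only [ramp_of_half_le ht, indicator_of_notMem (notMem_Iio.2 ht)]
    exact tendsto_const_nhds

theorem Jincl_coeFn (f : C(I, ℝ)) : ⇑(Jincl f) =ᵐ[volume] ⇑f :=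
  ContinuousMap.coeFn_toLp volume f

theorem monotone_Jincl : Monotone Jincl := by
  intro f g hfg
  rw [← Lp.coeFn_le]
  filter_upwards [Jincl_coeFn f, Jincl_coeFn g] with t hf hg
  rw [hf, hg]
  exact hfg t

theorem orderConvTo_zero_Jincl {φ : ℕ → C(I, ℝ)} (hφ : Monotone φ)
    {v : Lp ℝ 1 (volume : Measure (I))}
    (hv : ∀ᵐ t ∂volume, Tendsto (fun n => φ n t) atTop (𝓝 (v t))) :
    OrderConvTo (fun n => ((0, Jincl (φ n)) : Espace)) (0, v) := by
  have hJφ : Monotone (Jincl ∘ φ) := monotone_Jincl.comp hφ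
  refine Monotone.orderConvTo_of_isLUB_s3 (fun n m hnm => ⟨le_rfl, hJφ hnm⟩)
    (isLUB_range_prodMk_const 0 (Lp.isLUB_range_of_monotone_of_ae_tendsto hJφ ?_))
  filter_upwards [hv, ae_all_iff.2 fun n => Jincl_coeFn (φ n)] with t hvt hJ
  simpa only [Function.comp_apply, hJ] using hvt

theorem quasiCSigmaLevi_of_eq_zero_Jincl (T : Espace →ₗ[ℝ] Espace)
    (hT : ∀ v : Espace, T v = (0, Jincl v.1)) : QuasiCSigmaLevi T := by
  rintro x hx hx_nonneg ⟨M, hM⟩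
  have h_bound (n : ℕ) (t : I) : |(x n).1 t| ≤ M :=
    ((x n).1.norm_coe_le_norm t).trans ((norm_fst_le (x n)).trans (hM n))
  obtain ⟨v, hv⟩ := exists_Lp_ae_tendsto_of_monotone (μ := volume) (p := 1)
    (fun n => (x n).1.continuous.measurable) (fun t n m hnm => (hx hnm).1 t) h_bound
  refine ⟨(0, v), ?_⟩
  simp_rw [hT]
  exact orderConvTo_zero_Jincl (fun n m hnm => (hx hnm).1) hv

noncomputable def halfStep : Lp ℝ 1 (volume : Measure (I)) :=
  indicatorConstLp 1 (measurable_subtype_coe measurableSet_Iio :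
    MeasurableSet (Subtype.val ⁻¹' Iio (1 / 2 : ℝ))) (measure_ne_top _ _) 1

theorem halfStep_ae_eq :
    ⇑halfStep =ᵐ[volume] fun t : I => (Iio (1 / 2)).indicator 1 (t : ℝ) :=
  indicatorConstLp_coeFn

theorem zero_halfStep_notMem_range (T : Espace →ₗ[ℝ] Espace)
    (hT : ∀ v : Espace, T v = (0, Jincl v.1)) : ((0, halfStep) : Espace) ∉ range T := by
  rintro ⟨v, hv⟩
  have hJ : Jincl v.1 = halfStep := congrArg Prod.snd ((hT v).symm.trans hv)
  exact v.1.not_ae_eq_indicator_Iio (x := 1 / 2) ⟨by norm_num, by norm_num⟩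
    ((Jincl_coeFn v.1).symm.trans (hJ ▸ halfStep_ae_eq))

noncomputable def rampSeq (n : ℕ) : Espace :=
  ((⟨ramp n, continuous_ramp n⟩ : C(ℝ, ℝ)).restrict I, 0)

theorem monotone_rampSeq : Monotone rampSeq :=
  fun _ _ hnm => ⟨fun t => monotone_ramp t hnm, le_rfl⟩

theorem rampSeq_nonneg (n : ℕ) : 0 ≤ rampSeq n :=
  ⟨fun t => ramp_nonneg n t, le_rfl⟩

theorem norm_rampSeq_le (n : ℕ) : ‖rampSeq n‖ ≤ 1 := by
  refine max_le ((ContinuousMap.norm_le _ zero_le_one).2 fun t => ?_) (by simp [rampSeq])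
  rw [Real.norm_eq_abs, abs_le]
  exact ⟨(neg_nonpos.2 zero_le_one).trans (ramp_nonneg n t), ramp_le_one n t⟩

theorem orderConvTo_rampSeq (T : Espace →ₗ[ℝ] Espace)
    (hT : ∀ v : Espace, T v = (0, Jincl v.1)) :
    OrderConvTo (fun n => T (rampSeq n)) (0, halfStep) := by
  simp_rw [hT]
  refine orderConvTo_zero_Jincl (fun _ _ hnm => (monotone_rampSeq hnm).1) ?_
  filter_upwards [halfStep_ae_eq] with t ht
  rw [ht]
  exact tendsto_ramp t

/-- the operator `T(φ, ψ) = (0, φ)` on `E = C[0,1] ⊕ L¹[0,1]` is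
positive and quasi-c-σ-Levi, but not σ-Levi: there is a norm-bounded increasing
sequence in `E₊` whose image under `T` order converges to an element outside
the range of `T`. -/
theorem example_quasi_c_Levi_not_Levi
    (T : Espace →ₗ[ℝ] Espace) (hT : ∀ v : Espace, T v = (0, Jincl v.1)) :
    (∀ v : Espace, 0 ≤ v → 0 ≤ T v) ∧
    QuasiCSigmaLevi T ∧
    ¬ SigmaLevi T ∧
    ∃ f : ℕ → Espace, Monotone f ∧ (∀ n, 0 ≤ f n) ∧ (∃ M : ℝ, ∀ n, ‖f n‖ ≤ M) ∧
      ∃ g : Espace, OrderConvTo (fun n => T (f n)) g ∧ g ∉ Set.range T := by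
  have h_conv := orderConvTo_rampSeq T hT
  have h_out := zero_halfStep_notMem_range T hT
  refine ⟨fun v hv => ?_, quasiCSigmaLevi_of_eq_zero_Jincl T hT, fun h_levi => ?_,
    rampSeq, monotone_rampSeq, rampSeq_nonneg, ⟨1, norm_rampSeq_le⟩, _, h_conv, h_out⟩
  · rw [hT]
    exact ⟨le_rfl, show 0 ≤ Jincl v.1 from map_zero Jincl ▸ monotone_Jincl hv.1⟩
  · obtain ⟨z, hz⟩ := h_levi rampSeq monotone_rampSeq rampSeq_nonneg ⟨1, norm_rampSeq_le⟩
    exact h_out ⟨z, hz.unique h_conv⟩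
end

section
/- The identity operator on the Banach lattice c of convergent real sequences is quasi-σ-Levi but not quasi-c-σ-Levi: every norm-bounded increasing sequence in c_+ is order Cauchy in c, but the sequence f_n = Σ_{k=1}^n e_{2k−1} is bounded increasing in c_+ and is not order convergent in c. -/
/-- membership in `c`, the space of convergent real sequences. -/
def InC (f : ℕ → ℝ) : Prop := ∃ l : ℝ, Filter.Tendsto f Filter.atTop (nhds l)

/-- `p ↓ 0` within the sublattice `c` of `ℕ → ℝ` (pointwise order): `p` is a
decreasing sequence of elements of `c` whose greatest lower bound in `c` is `0`. -/
def DownToZeroInC (p : ℕ → ℕ → ℝ) : Prop :=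
  (∀ n, InC (p n)) ∧ Antitone p ∧ (∀ n, 0 ≤ p n) ∧
    ∀ q : ℕ → ℝ, InC q → (∀ n, q ≤ p n) → q ≤ 0

/-- order Cauchy in `c`. -/
def OrderCauchyInC (x : ℕ → ℕ → ℝ) : Prop :=
  ∃ p : ℕ → ℕ → ℝ, DownToZeroInC p ∧
    ∀ n n' n'', n ≤ n' → n ≤ n'' → |x n' - x n''| ≤ p n

/-- order convergence in `c`. -/
def OrderConvInC (x : ℕ → ℕ → ℝ) (l : ℕ → ℝ) : Prop :=
  InC l ∧ ∃ p : ℕ → ℕ → ℝ, DownToZeroInC p ∧ ∀ n, |x n - l| ≤ p n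

/-- the identity on `c` is quasi-σ-Levi (every norm-bounded
increasing sequence in `c₊` is order Cauchy in `c`), but not quasi-c-σ-Levi:
the sequence `f_n = ∑_{k=1}^n e_{2k-1}` is bounded and increasing in `c₊`
but not order convergent in `c`. -/
theorem identity_on_c_quasi_Levi_not_quasi_c_Levi :
    (∀ x : ℕ → ℕ → ℝ, (∀ n, InC (x n)) → Monotone x → (∀ n, 0 ≤ x n) →
      (∃ M : ℝ, ∀ n k, x n k ≤ M) → OrderCauchyInC x) ∧
    (∃ f : ℕ → ℕ → ℝ,
      (∀ n k, f n k = if k % 2 = 0 ∧ k < 2 * n then 1 else 0) ∧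
      (∀ n, InC (f n)) ∧ Monotone f ∧ (∀ n, 0 ≤ f n) ∧
      (∃ M : ℝ, ∀ n k, f n k ≤ M) ∧
      ¬ ∃ l : ℕ → ℝ, OrderConvInC f l) := by
  constructor
  · -- quasi-σ-Levi
    rintro x hxc hmono hpos ⟨M, hM⟩
    set s : ℕ → ℝ := fun k => ⨆ n, x n k with hs
    have hbdd : ∀ k, BddAbove (Set.range fun n => x n k) := by
      intro k; exact ⟨M, by rintro r ⟨n, rfl⟩; exact hM n k⟩
    have hle_s : ∀ n k, x n k ≤ s k := fun n k => le_ciSup (hbdd k) n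
    have hsM : ∀ k, s k ≤ M := fun k => ciSup_le fun n => hM n k
    have hx0 : ∀ n k, 0 ≤ x n k := fun n k => hpos n k
    have htend : ∀ k, Filter.Tendsto (fun n => x n k) Filter.atTop (nhds (s k)) := by
      intro k
      exact tendsto_atTop_ciSup (fun a b hab => hmono hab k) (hbdd k)
    set M' : ℝ := max M 0 with hM'
    refine ⟨fun n k => if k < n then s k - x n k else M', ⟨?_, ?_, ?_, ?_⟩, ?_⟩
    · -- InC
      intro n
      refine ⟨M', Filter.Tendsto.congr' ?_ tendsto_const_nhds⟩
      filter_upwards [Filter.eventually_ge_atTop n] with k hk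
      simp [Nat.not_lt.mpr hk]
    · -- Antitone
      intro a b hab k
      dsimp only
      by_cases hkb : k < b
      · by_cases hka : k < a
        · simp only [if_pos hkb, if_pos hka]
          have := hmono hab k
          linarith
        · simp only [if_pos hkb, if_neg hka]
          have h1 := hsM k
          have h2 := hx0 b k
          have : s k - x b k ≤ M := by linarith
          exact this.trans (le_max_left _ _)
      · have hka : ¬ k < a := fun h => hkb (h.trans_le hab)
        simp [hkb, hka]
    · -- nonneg
      intro n k
      dsimp only
      by_cases hk : k < n
      · simp only [if_pos hk, Pi.zero_apply]
        have := hle_s n k; linarith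
      · simp only [if_neg hk, Pi.zero_apply]
        exact le_max_right _ _
    · -- inf is 0
      intro q _ hq k
      have hqk : ∀ n, k < n → q k ≤ s k - x n k := by
        intro n hn
        have := hq n k
        simpa [if_pos hn] using this
      have htendsub : Filter.Tendsto (fun n => s k - x n k) Filter.atTop (nhds (s k - s k)) :=
        Filter.Tendsto.sub tendsto_const_nhds (htend k)
      have h0 : Filter.Tendsto (fun n => s k - x n k) Filter.atTop (nhds 0) := by
        simpa using htendsub
      have : q k ≤ 0 := by
        refine ge_of_tendsto h0 ?_
        filter_upwards [Filter.eventually_gt_atTop k] with n hn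
        exact hqk n hn
      exact this
    · -- Cauchy bound
      intro n n' n'' h1 h2 k
      simp only [Pi.abs_apply, Pi.sub_apply]
      have key : ∀ a b : ℕ, n ≤ a → n ≤ b →
          x a k - x b k ≤ (if k < n then s k - x n k else M') := by
        intro a b _ hb
        have ha' := hle_s a k
        have hb' := hmono hb k
        by_cases hk : k < n
        · simp only [if_pos hk]; linarith
        · simp only [if_neg hk]
          have := hx0 b k
          have := hsM k
          have : x a k - x b k ≤ M := by linarith
          exact this.trans (le_max_left _ _)
      rw [abs_sub_le_iff]
      exact ⟨key n' n'' h1 h2, key n'' n' h2 h1⟩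
  · -- not quasi-c-σ-Levi
    refine ⟨fun n k => if k % 2 = 0 ∧ k < 2 * n then 1 else 0, fun n k => rfl, ?_, ?_, ?_, ?_, ?_⟩
    · -- InC (f n)
      intro n
      refine ⟨0, Filter.Tendsto.congr' ?_ tendsto_const_nhds⟩
      filter_upwards [Filter.eventually_ge_atTop (2 * n)] with k hk
      simp [Nat.not_lt.mpr hk]
    · -- Monotone
      intro a b hab k
      dsimp only
      by_cases h : k % 2 = 0 ∧ k < 2 * a
      · have h' : k % 2 = 0 ∧ k < 2 * b := ⟨h.1, h.2.trans_le (by omega)⟩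
        simp [h, h']
      · simp only [if_neg h]
        by_cases h' : k % 2 = 0 ∧ k < 2 * b <;> simp [h']
    · intro n k
      dsimp only
      by_cases h : k % 2 = 0 ∧ k < 2 * n <;> simp [h]
    · refine ⟨1, fun n k => ?_⟩
      by_cases h : k % 2 = 0 ∧ k < 2 * n <;> simp [h]
    · -- not order convergent
      rintro ⟨l, ⟨L, hL⟩, p, ⟨hpC, hpA, hp0, hpInf⟩, hfp⟩
      set f : ℕ → ℕ → ℝ := fun n k => if k % 2 = 0 ∧ k < 2 * n then 1 else 0 with hf
      have hfpk : ∀ n k, |f n k - l k| ≤ p n k := by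
        intro n k
        have := hfp n k
        simpa using this
      have hfInC : ∀ m, InC fun k => f m k - l k := by
        intro m
        refine ⟨0 - L, Filter.Tendsto.sub ?_ hL⟩
        refine Filter.Tendsto.congr' ?_ tendsto_const_nhds
        filter_upwards [Filter.eventually_ge_atTop (2 * m)] with k hk
        simp [hf, Nat.not_lt.mpr hk]
      -- l is an upper bound of the f m
      have hub : ∀ m k, f m k ≤ l k := by
        intro m
        have : (fun k => f m k - l k) ≤ 0 := by
          refine hpInf _ (hfInC m) ?_
          intro n k
          have hmono : ∀ a b : ℕ, a ≤ b → f a k ≤ f b k := by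
            intro a b hab
            by_cases h : k % 2 = 0 ∧ k < 2 * a
            · have h' : k % 2 = 0 ∧ k < 2 * b := ⟨h.1, h.2.trans_le (by omega)⟩
              simp [hf, h, h']
            · simp only [hf, if_neg h]
              by_cases h' : k % 2 = 0 ∧ k < 2 * b <;> simp [h']
          calc f m k - l k ≤ f (max n m) k - l k := by
                have := hmono m (max n m) (le_max_right _ _); linarith
            _ ≤ |f (max n m) k - l k| := le_abs_self _
            _ ≤ p (max n m) k := hfpk _ k
            _ ≤ p n k := hpA (le_max_left _ _) k
        intro k
        have := this k
        simp only [Pi.zero_apply] at this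
        linarith
      -- l k ≥ 1 for even k
      have heven : ∀ k, k % 2 = 0 → 1 ≤ l k := by
        intro k hk
        have h1 : f (k + 1) k = 1 := by simp [hf, hk]; omega
        have := hub (k + 1) k
        rw [h1] at this; exact this
      -- L ≥ 1
      have hL1 : 1 ≤ L := by
        have hdbl : Filter.Tendsto (fun k : ℕ => 2 * k) Filter.atTop Filter.atTop :=
          Filter.tendsto_atTop_atTop.mpr fun b => ⟨b, fun a ha => by omega⟩
        have h2 : Filter.Tendsto (fun k => l (2 * k)) Filter.atTop (nhds L) := hL.comp hdbl
        refine ge_of_tendsto h2 ?_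
        filter_upwards with k
        exact heven (2 * k) (by omega)
      -- eventually l positive
      have hpos' : ∀ᶠ k in Filter.atTop, 0 < l k :=
        hL.eventually (eventually_gt_nhds (by linarith))
      obtain ⟨K, hK⟩ := Filter.eventually_atTop.mp hpos'
      set j : ℕ := 2 * K + 1 with hj
      have hjodd : j % 2 = 1 := by omega
      have hlj : 0 < l j := hK j (by omega)
      -- the upper bound u
      set u : ℕ → ℝ := fun k => if k = j then 0 else max (l k) 1 with hu
      have huInC : InC u := by
        refine ⟨max L 1, Filter.Tendsto.congr' ?_ (hL.max tendsto_const_nhds)⟩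
        filter_upwards [Filter.eventually_ge_atTop (j + 1)] with k hk
        have : k ≠ j := by omega
        simp [hu, this]
      have hubU : ∀ n k, f n k ≤ u k := by
        intro n k
        by_cases hkj : k = j
        · subst hkj
          have : ¬ (j % 2 = 0 ∧ j < 2 * n) := by omega
          simp [hf, hu, this]
        · simp only [hu, if_neg hkj]
          by_cases h : k % 2 = 0 ∧ k < 2 * n
          · simp [hf, h]
          · simp only [hf, if_neg h]
            exact le_max_of_le_right zero_le_one
      -- l ≤ u
      have hlu : (fun k => l k - u k) ≤ 0 := by
        refine hpInf _ ?_ ?_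
        · refine ⟨L - max L 1, Filter.Tendsto.sub hL ?_⟩
          refine Filter.Tendsto.congr' ?_ (hL.max tendsto_const_nhds)
          filter_upwards [Filter.eventually_ge_atTop (j + 1)] with k hk
          have : k ≠ j := by omega
          simp [hu, this]
        · intro n k
          have h1 := hfpk n k
          have h2 := hubU n k
          have : l k - u k ≤ l k - f n k := by linarith
          calc l k - u k ≤ l k - f n k := this
            _ ≤ |f n k - l k| := by rw [abs_sub_comm]; exact le_abs_self _
            _ ≤ p n k := h1
      have := hlu j
      simp only [Pi.zero_apply] at this
      have huj : u j = 0 := by simp [hu]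
      rw [huj] at this
      linarith
end

section
/- Let (α_n) be a sequence of strictly positive reals converging to 0, and define S : c → c₀ by S(Σ a_n e_n) = Σ α_n a_n e_n. Then S is a positive compact operator, but S is not σ-Levi: for the bounded increasing sequence x_n = Σ_{k=1}^n e_{2k} in c_+, the sequence (Sx_n) order converges to Σ_{k=1}^∞ α_{2k} e_{2k} ∈ c₀, yet there is no x ∈ c with Sx = Σ_{k=1}^∞ α_{2k} e_{2k}. -/
/-- membership in `c₀`, the space of null real sequences. -/
def InC0 (f : ℕ → ℝ) : Prop := Filter.Tendsto f Filter.atTop (nhds 0)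

/-- `p ↓ 0` within the sublattice `c₀` of `ℕ → ℝ` (pointwise order). -/
def DownToZeroInC0 (p : ℕ → ℕ → ℝ) : Prop :=
  (∀ n, InC0 (p n)) ∧ Antitone p ∧ (∀ n, 0 ≤ p n) ∧
    ∀ q : ℕ → ℝ, InC0 q → (∀ n, q ≤ p n) → q ≤ 0

/-- order convergence in `c₀`. -/
def OrderConvInC0 (x : ℕ → ℕ → ℝ) (l : ℕ → ℝ) : Prop :=
  InC0 l ∧ ∃ p : ℕ → ℕ → ℝ, DownToZeroInC0 p ∧ ∀ n, |x n - l| ≤ p n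

/-- for strictly positive `α_n → 0`, the multiplication operator
`S(Σ a_n e_n) = Σ α_n a_n e_n` is a positive compact operator from `c` into
`c₀`, but it is not σ-Levi: for `x_n = ∑_{k=1}^n e_{2k}` the sequence `(Sx_n)`
order converges in `c₀` to the sequence supported on even (1-indexed)
coordinates with values `α`, which is not of the form `Sx` for any `x ∈ c`. -/
theorem multiplication_operator_compact_not_sigma_Levi
    (α : ℕ → ℝ) (hαpos : ∀ n, 0 < α n)
    (hα0 : Filter.Tendsto α Filter.atTop (nhds 0))
    (S : (ℕ → ℝ) → (ℕ → ℝ)) (hS : ∀ f k, S f k = α k * f k)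
    (x : ℕ → ℕ → ℝ)
    (hx : ∀ n k, x n k = if k % 2 = 1 ∧ k < 2 * n then 1 else 0)
    (L : ℕ → ℝ) (hL : ∀ k, L k = if k % 2 = 1 then α k else 0) :
    (∀ f : ℕ → ℝ, 0 ≤ f → 0 ≤ S f) ∧
    (∀ f : ℕ → ℝ, InC f → InC0 (S f)) ∧
    -- compactness: the image of the unit ball of `c` is totally bounded in sup norm
    (∀ ε : ℝ, 0 < ε → ∃ Y : Finset (ℕ → ℝ),
      ∀ f : ℕ → ℝ, InC f → (∀ k, |f k| ≤ 1) →
        ∃ y ∈ Y, ∀ k, |S f k - y k| ≤ ε) ∧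
    -- `x` is a bounded increasing sequence in `c₊`
    (∀ n, InC (x n)) ∧ Monotone x ∧ (∀ n, 0 ≤ x n) ∧ (∀ n k, x n k ≤ 1) ∧
    -- `(Sx_n)` order converges in `c₀` to `L`
    OrderConvInC0 (fun n => S (x n)) L ∧
    -- yet `L` is not the image of any element of `c`
    ¬ ∃ f : ℕ → ℝ, InC f ∧ S f = L := by
  classical
  refine ⟨?_, ?_, ?_, ?_, ?_, ?_, ?_, ?_, ?_⟩
  · -- positivity
    intro f hf k
    rw [hS]
    exact mul_nonneg (hαpos k).le (hf k)
  · -- maps c into c₀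
    rintro f ⟨l, hl⟩
    have h := hα0.mul hl
    rw [zero_mul] at h
    exact h.congr fun k => (hS f k).symm
  · -- compactness
    intro ε hε
    obtain ⟨N, hN⟩ := (Metric.tendsto_atTop.mp hα0 ε hε)
    refine ⟨Finset.image
      (fun v : Fin N → ℤ => fun k => if h : k < N then ε * v ⟨k, h⟩ else 0)
      (Fintype.piFinset fun i : Fin N => Finset.Icc (-⌈α i / ε⌉) ⌈α i / ε⌉), ?_⟩
    intro f _ hf1
    have hbound : ∀ k, |S f k| ≤ α k := by
      intro k
      rw [hS, abs_mul, abs_of_pos (hαpos k)]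
      calc α k * |f k| ≤ α k * 1 := mul_le_mul_of_nonneg_left (hf1 k) (hαpos k).le
        _ = α k := mul_one _
    set v : Fin N → ℤ := fun i => ⌊S f i / ε⌋ with hv
    refine ⟨_, Finset.mem_image.mpr ⟨v, ?_, rfl⟩, ?_⟩
    · rw [Fintype.mem_piFinset]
      intro i
      rw [Finset.mem_Icc]
      have h1 : |S f (i : ℕ) / ε| ≤ α i / ε := by
        rw [abs_div, abs_of_pos hε]
        exact (div_le_div_iff_of_pos_right hε).mpr (hbound i)
      have h2 := abs_le.mp h1
      constructor
      · rw [Int.le_floor]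
        calc ((-⌈α (i:ℕ) / ε⌉ : ℤ) : ℝ) = -(⌈α (i:ℕ) / ε⌉ : ℝ) := by push_cast; ring
          _ ≤ -(α i / ε) := by simpa using Int.le_ceil (α (i:ℕ) / ε)
          _ ≤ _ := h2.1
      · calc ⌊S f (i:ℕ) / ε⌋ ≤ ⌈S f (i:ℕ) / ε⌉ := Int.floor_le_ceil _
          _ ≤ ⌈α (i:ℕ) / ε⌉ := Int.ceil_le_ceil h2.2
    · intro k
      by_cases hk : k < N
      · simp only [dif_pos hk]
        have heq : S f k - ε * ⌊S f k / ε⌋ = ε * (S f k / ε - ⌊S f k / ε⌋) := by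
          field_simp
        rw [hv, heq]
        rw [abs_of_nonneg (mul_nonneg hε.le (by linarith [Int.floor_le (S f k / ε)]))]
        calc ε * (S f k / ε - ⌊S f k / ε⌋) ≤ ε * 1 := by
              refine mul_le_mul_of_nonneg_left ?_ hε.le
              have := Int.fract_lt_one (S f k / ε)
              rw [Int.fract] at this
              linarith
          _ = ε := mul_one _
      · simp only [dif_neg hk, sub_zero]
        calc |S f k| ≤ α k := hbound k
          _ ≤ |α k - 0| := by rw [sub_zero, abs_of_pos (hαpos k)]
          _ ≤ ε := (hN k (Nat.le_of_not_lt hk)).le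
  · -- each x n in c
    intro n
    refine ⟨0, tendsto_const_nhds.congr' ?_⟩
    filter_upwards [Filter.eventually_ge_atTop (2 * n)] with k hk
    rw [hx]
    simp [Nat.not_lt.mpr hk]
  · -- monotone
    intro n m hnm k
    rw [hx, hx]
    split_ifs with h1 h2 h2
    · exact le_refl 1
    · exact absurd ⟨h1.1, lt_of_lt_of_le h1.2 (by omega)⟩ h2
    · exact zero_le_one
    · exact le_refl 0
  · -- nonneg
    intro n k
    rw [hx]
    split_ifs <;> norm_num
  · -- bounded by 1
    intro n k
    rw [hx]
    split_ifs <;> norm_num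
  · -- order convergence
    have hLbd : ∀ k, 0 ≤ L k ∧ L k ≤ α k := by
      intro k
      rw [hL]
      split_ifs
      · exact ⟨(hαpos k).le, le_refl _⟩
      · exact ⟨le_refl _, (hαpos k).le⟩
    have hLc0 : InC0 L :=
      squeeze_zero (fun k => (hLbd k).1) (fun k => (hLbd k).2) hα0
    refine ⟨hLc0, fun n k => if k % 2 = 1 ∧ 2 * n ≤ k then α k else 0, ⟨?_, ?_, ?_, ?_⟩, ?_⟩
    · intro n
      refine squeeze_zero (g := α) (fun k => ?_) (fun k => ?_) hα0
      · simp only; split_ifs <;> simp [(hαpos _).le]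
      · simp only; split_ifs <;> simp [(hαpos _).le]
    · intro n m hnm k
      simp only
      split_ifs with h1 h2 h2
      · exact le_refl _
      · exact absurd ⟨h1.1, le_trans (by omega) h1.2⟩ h2
      · exact (hαpos k).le
      · exact le_refl _
    · intro n k
      simp only [Pi.zero_apply]
      split_ifs
      · exact (hαpos k).le
      · exact le_refl _
    · intro q hq hqle k
      by_contra hqk
      push_neg at hqk
      simp only [Pi.zero_apply] at hqk
      have := hqle (k + 1) k
      simp only [show ¬(k % 2 = 1 ∧ 2 * (k + 1) ≤ k) by omega, if_false] at this
      exact absurd this (not_le.mpr hqk)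
    · intro n k
      simp only [Pi.abs_apply, Pi.sub_apply, hS, hx, hL]
      rcases Nat.lt_or_ge k (2 * n) with hk | hk
      · by_cases h : k % 2 = 1
        · simp [h, hk, Nat.not_le.mpr hk]
        · simp only [h, false_and, if_false, mul_zero, sub_zero, abs_zero]
          exact le_refl _
      · by_cases h : k % 2 = 1
        · simp only [h, Nat.not_lt.mpr hk, hk, if_true, if_false, true_and, and_true, and_false]
          rw [mul_zero, zero_sub, abs_neg, abs_of_pos (hαpos k)]
        · simp only [h, false_and, if_false, mul_zero, sub_zero, abs_zero]
          exact le_refl _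
  · -- not sigma-Levi
    rintro ⟨f, ⟨l, hl⟩, hSf⟩
    have hfval : ∀ k, f k = if k % 2 = 1 then 1 else 0 := by
      intro k
      have h := congrFun hSf k
      rw [hS, hL] at h
      split_ifs at h ⊢ with hp
      · exact mul_left_cancel₀ (hαpos k).ne' (h.trans (mul_one (α k)).symm)
      · exact (mul_eq_zero.mp h).resolve_left (hαpos k).ne'
    have h2n : Filter.Tendsto (fun n : ℕ => 2 * n) Filter.atTop Filter.atTop :=
      Filter.tendsto_atTop_atTop.mpr fun b => ⟨b, fun a ha => by omega⟩
    have h2n1 : Filter.Tendsto (fun n : ℕ => 2 * n + 1) Filter.atTop Filter.atTop :=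
      Filter.tendsto_atTop_atTop.mpr fun b => ⟨b, fun a ha => by omega⟩
    have he : Filter.Tendsto (fun n : ℕ => f (2 * n)) Filter.atTop (nhds l) := hl.comp h2n
    have ho : Filter.Tendsto (fun n : ℕ => f (2 * n + 1)) Filter.atTop (nhds l) := hl.comp h2n1
    have he0 : Filter.Tendsto (fun _ : ℕ => (0 : ℝ)) Filter.atTop (nhds l) :=
      he.congr fun n => by rw [hfval]; simp [Nat.mul_mod_right]
    have ho1 : Filter.Tendsto (fun _ : ℕ => (1 : ℝ)) Filter.atTop (nhds l) :=
      ho.congr fun n => by rw [hfval]; simp [Nat.mul_add_mod]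
    have : (0 : ℝ) = l := tendsto_nhds_unique he0 tendsto_const_nhds |>.symm
    have h1 : (1 : ℝ) = l := tendsto_nhds_unique ho1 tendsto_const_nhds |>.symm
    linarith [this, h1]
end

section
/- The set L^σ_Levi(c, c₀) of σ-Levi operators from c to c₀ is not closed in the operator norm: there exists a sequence of finite-rank (hence σ-Levi) operators S_i converging in operator norm to an operator S that is not σ-Levi. -/
/-- `S : c → c₀` is a σ-Levi operator. -/
def SigmaLeviCtoC0 (S : (ℕ → ℝ) → (ℕ → ℝ)) : Prop :=
  ∀ x : ℕ → ℕ → ℝ, (∀ n, InC (x n)) → Monotone x → (∀ n, 0 ≤ x n) →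
    (∃ M : ℝ, ∀ n k, x n k ≤ M) →
    ∃ z : ℕ → ℝ, InC z ∧ OrderConvInC0 (fun n => S (x n)) (S z)

/-!
The diagonal operator `S f = (α k * f k)_k` with `α k = 1 / (k + 1)` is the operator-norm limit of
its truncations `S_i`, since the truncation error on the unit ball is at most `α i`. A truncation
only sees finitely many coordinates, so for a bounded increasing `x_n` one may take `z` to be the
pointwise supremum cut off beyond `i`. For `S` itself, order convergence forces coordinatewise
convergence, and since no `α k` vanishes, the limit `z` is determined coordinatewise: for `x_n` the
indicator of the even numbers below `n` it must be the indicator of all even numbers, which is not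
in `c`.
-/

open Filter Topology

lemma inC0_of_eq_zero {f : ℕ → ℝ} (N : ℕ) (h : ∀ k, N ≤ k → f k = 0) : InC0 f :=
  tendsto_const_nhds.congr' (eventually_atTop.2 ⟨N, fun k hk => (h k hk).symm⟩)

lemma DownToZeroInC0.tendsto_apply {p : ℕ → ℕ → ℝ} (hp : DownToZeroInC0 p) (k : ℕ) :
    Tendsto (fun n => p n k) atTop (𝓝 0) := by
  obtain ⟨-, hanti, hnonneg, hinf⟩ := hp
  have hbdd : BddBelow (Set.range fun n => p n k) := ⟨0, by rintro _ ⟨n, rfl⟩; exact hnonneg n k⟩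
  have hlim := tendsto_atTop_ciInf (fun a b hab => hanti hab k) hbdd
  suffices hc : ⨅ n, p n k ≤ 0 by
    rwa [le_antisymm hc (le_ciInf fun n => hnonneg n k)] at hlim
  -- the infimum placed at coordinate `k` is a lower bound in `c₀`
  have hq : ∀ n, Pi.single k (⨅ n, p n k) ≤ p n := by
    intro n j
    rw [Pi.single_apply]
    split_ifs with hj
    · subst hj; exact ciInf_le hbdd n
    · exact hnonneg n j
  simpa using hinf _ (inC0_of_eq_zero (k + 1) fun j hj => by simp [Pi.single_apply]; omega) hq k

lemma downToZeroInC0_of_tendsto {p : ℕ → ℕ → ℝ} (hc0 : ∀ n, InC0 (p n)) (hanti : Antitone p)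
    (hnonneg : ∀ n, 0 ≤ p n) (hlim : ∀ k, Tendsto (fun n => p n k) atTop (𝓝 0)) :
    DownToZeroInC0 p :=
  ⟨hc0, hanti, hnonneg, fun _ _ hq k => ge_of_tendsto' (hlim k) fun n => hq n k⟩

lemma OrderConvInC0.tendsto_apply {x : ℕ → ℕ → ℝ} {l : ℕ → ℝ} (h : OrderConvInC0 x l) (k : ℕ) :
    Tendsto (fun n => x n k) atTop (𝓝 (l k)) := by
  obtain ⟨-, p, hp, hxp⟩ := h
  exact tendsto_iff_norm_sub_tendsto_zero.2 <|
    squeeze_zero (fun _ => norm_nonneg _) (fun n => hxp n k) (hp.tendsto_apply k)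

lemma InC.inC0_mul {f : ℕ → ℝ} (hf : InC f) {α : ℕ → ℝ} (hα : InC0 α) : InC0 (α * f) := by
  obtain ⟨l, hl⟩ := hf
  have h := hα.mul hl
  rwa [zero_mul] at h

lemma abs_truncation_sub_le {α f : ℕ → ℝ} (hα_anti : Antitone α) (hα_nonneg : ∀ k, 0 ≤ α k)
    (hf : ∀ k, |f k| ≤ 1) (i k : ℕ) : |(if k < i then α k * f k else 0) - α k * f k| ≤ α i := by
  split_ifs with hk
  · simpa using hα_nonneg i
  · calc |0 - α k * f k| = α k * |f k| := by
          rw [zero_sub, abs_neg, abs_mul, abs_of_nonneg (hα_nonneg k)]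
      _ ≤ α k := mul_le_of_le_one_right (hα_nonneg k) (hf k)
      _ ≤ α i := hα_anti (not_lt.1 hk)

lemma sigmaLeviCtoC0_mul_of_eq_zero (β : ℕ → ℝ) (N : ℕ) (hβ : ∀ k, N ≤ k → β k = 0) :
    SigmaLeviCtoC0 (β * ·) := by
  rintro x - hmono - ⟨M, hM⟩
  have hbdd : ∀ k, BddAbove (Set.range fun n => x n k) :=
    fun k => ⟨M, by rintro _ ⟨n, rfl⟩; exact hM n k⟩
  set L : ℕ → ℝ := fun k => ⨆ n, x n k
  have hxL : ∀ n k, x n k ≤ L k := fun n k => le_ciSup (hbdd k) n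
  have hlim : ∀ k, Tendsto (fun n => x n k) atTop (𝓝 (L k)) :=
    fun k => tendsto_atTop_ciSup (fun a b hab => hmono hab k) (hbdd k)
  refine ⟨fun k => if k < N then L k else 0, ⟨0, inC0_of_eq_zero N fun k hk => by simp; omega⟩,
    inC0_of_eq_zero N fun k hk => by simp [hβ k hk],
    fun n k => |β k| * (L k - x n k), downToZeroInC0_of_tendsto ?_ ?_ ?_ ?_, ?_⟩
  · exact fun n => inC0_of_eq_zero N fun k hk => by simp [hβ k hk]
  · exact fun a b hab k =>
      mul_le_mul_of_nonneg_left (sub_le_sub_left (hmono hab k) _) (abs_nonneg _)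
  · exact fun n k => mul_nonneg (abs_nonneg _) (sub_nonneg.2 (hxL n k))
  · intro k
    simpa using ((tendsto_const_nhds (x := L k)).sub (hlim k)).const_mul |β k|
  · intro n k
    simp only [Pi.abs_apply, Pi.sub_apply, Pi.mul_apply, ← mul_sub, abs_mul]
    split_ifs with hk
    · rw [abs_sub_comm, abs_of_nonneg (sub_nonneg.2 (hxL n k))]
    · simp [hβ k (not_lt.1 hk)]

lemma not_inC_indicator_even : ¬ InC fun k => if Even k then (1 : ℝ) else 0 := by
  rintro ⟨l, hl⟩
  have hstep : ∀ k : ℕ, |(if Even (k + 1) then (1 : ℝ) else 0) - if Even k then 1 else 0| = 1 := by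
    intro k
    by_cases hk : Even k <;> simp [hk, Nat.even_add_one]
  have hlim := ((hl.comp (tendsto_add_atTop_nat 1)).sub hl).abs
  simp only [Function.comp_def, hstep, sub_self, abs_zero] at hlim
  exact one_ne_zero (tendsto_const_nhds_iff.1 hlim)

lemma not_sigmaLeviCtoC0_mul (β : ℕ → ℝ) (hβ : ∀ k, β k ≠ 0) : ¬ SigmaLeviCtoC0 (β * ·) := by
  intro hLevi
  set x : ℕ → ℕ → ℝ := fun n k => if k < n ∧ Even k then 1 else 0
  have hmono : Monotone x := by
    intro a b hab k
    by_cases h : k < a ∧ Even k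
    · simp [x, h, h.1.trans_le hab]
    · simp only [x, h, if_false]
      split_ifs <;> norm_num
  obtain ⟨z, hz, hconv⟩ := hLevi x
    (fun n => ⟨0, inC0_of_eq_zero n fun k hk => by simp [x]; omega⟩) hmono
    (fun n k => by simp only [x]; split_ifs <;> norm_num)
    ⟨1, fun n k => by simp only [x]; split_ifs <;> norm_num⟩
  suffices hz_eq : z = fun k => if Even k then 1 else 0 from not_inC_indicator_even (hz_eq ▸ hz)
  funext k
  have hlim : Tendsto (fun n => β k * x n k) atTop (𝓝 (β k * if Even k then 1 else 0)) :=
    tendsto_const_nhds.congr' <| eventually_atTop.2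
      ⟨k + 1, fun n hn => by simp [x, show k < n by omega]⟩
  exact mul_left_cancel₀ (hβ k) (tendsto_nhds_unique (hconv.tendsto_apply k) hlim)

/-- the set of σ-Levi operators from `c` to `c₀` is not closed in
the operator norm: there are finite-rank (hence σ-Levi) operators `S_i`
converging in operator norm to an operator `S` which is not σ-Levi. -/
theorem sigma_Levi_not_norm_closed :
    ∃ (S : (ℕ → ℝ) → (ℕ → ℝ)) (Si : ℕ → (ℕ → ℝ) → (ℕ → ℝ)) (α : ℕ → ℝ),
      (∀ n, 0 < α n) ∧ Filter.Tendsto α Filter.atTop (nhds 0) ∧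
      (∀ f k, S f k = α k * f k) ∧
      (∀ i f k, Si i f k = if k < i then α k * f k else 0) ∧
      -- each `Si` is finite rank (supported on finitely many coordinates)
      (∀ i f k, i ≤ k → Si i f k = 0) ∧
      -- each `Si` maps `c` into `c₀`, and so does `S`
      (∀ i f, InC f → InC0 (Si i f)) ∧ (∀ f, InC f → InC0 (S f)) ∧
      -- each `Si` is σ-Levi
      (∀ i, SigmaLeviCtoC0 (Si i)) ∧
      -- `Si → S` in the operator norm
      (∃ ε : ℕ → ℝ, Filter.Tendsto ε Filter.atTop (nhds 0) ∧
        ∀ i (f : ℕ → ℝ), InC f → (∀ k, |f k| ≤ 1) → ∀ k, |Si i f k - S f k| ≤ ε i) ∧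
      -- but `S` is not σ-Levi
      ¬ SigmaLeviCtoC0 S := by
  set α : ℕ → ℝ := fun n => 1 / ((n : ℝ) + 1)
  have hα_pos : ∀ n, 0 < α n := fun n => by positivity
  have hα_lim : Tendsto α atTop (𝓝 0) := tendsto_one_div_add_atTop_nhds_zero_nat
  have hα_anti : Antitone α := fun i k hik => one_div_le_one_div_of_le (by positivity) (by simpa)
  refine ⟨(α * ·), fun i f k => if k < i then α k * f k else 0, α, hα_pos, hα_lim,
    fun _ _ => rfl, fun _ _ _ => rfl, ?_, ?_, fun f hf => hf.inC0_mul hα_lim, fun i => ?_,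
    ⟨α, hα_lim, fun i f _ hf k => abs_truncation_sub_le hα_anti (fun k => (hα_pos k).le) hf i k⟩,
    not_sigmaLeviCtoC0_mul α fun k => (hα_pos k).ne'⟩
  · intro i f k hik
    simp [hik]
  · exact fun i f _ => inC0_of_eq_zero i fun k hk => by simp [hk]
  · convert sigmaLeviCtoC0_mul_of_eq_zero (fun k => if k < i then α k else 0) i
      (fun k hk => by simp [hk]) using 2 with f
    funext k
    simp only [Pi.mul_apply, ite_mul, zero_mul]
end

section
/- Let E be a normed lattice, F a Banach lattice, and A a norm-bounded collectively quasi-c-σ-Levi subset of L(E,F). Then the set of all operators Σ_{i=1}^∞ α_i T_i, where T_i ∈ A, Σ_{i=1}^∞ |α_i| ≤ 1, and the series converges in operator norm, is collectively quasi-c-σ-Levi. -/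
/-- norm-bounded increasing sequence in the positive cone. -/
def IncBddPos {E : Type*} [NormedAddCommGroup E] [Lattice E] [IsOrderedAddMonoid E]
    [HasSolidNorm E] (x : ℕ → E) : Prop :=
  Monotone x ∧ (∀ n, 0 ≤ x n) ∧ ∃ M : ℝ, ∀ n, ‖x n‖ ≤ M

/-- collectively quasi-c-σ-Levi set of continuous operators. -/
def CollQuasiCLevi {E F : Type*} [NormedAddCommGroup E] [Lattice E] [IsOrderedAddMonoid E]
    [HasSolidNorm E] [NormedSpace ℝ E]
    [NormedAddCommGroup F] [Lattice F] [IsOrderedAddMonoid F]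
    [HasSolidNorm F] [NormedSpace ℝ F] (A : Set (E →L[ℝ] F)) : Prop :=
  ∀ x : ℕ → E, IncBddPos x →
    ∃ (y : (E →L[ℝ] F) → F) (p : ℕ → F), DownToZero p ∧
      ∀ T ∈ A, ∀ n, |T (x n) - y T| ≤ p n

open Filter Topology

section LatticeGroup

variable {G : Type*} [Lattice G] [AddCommGroup G] [IsOrderedAddMonoid G]

theorem nonneg_of_two_pow_nsmul_nonneg {w : G} : ∀ k : ℕ, 0 ≤ 2 ^ k • w → 0 ≤ w
  | 0, h => by simpa using h
  | k + 1, h => nonneg_of_two_pow_nsmul_nonneg k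
      (nsmul_two_semiclosed (by rwa [pow_succ, mul_nsmul] at h))

end LatticeGroup

section NormedLattice

variable {F : Type*} [NormedAddCommGroup F] [Lattice F] [HasSolidNorm F]

theorem norm_le_add_of_abs_sub_le {a b p : F} (h : |a - b| ≤ p) : ‖b‖ ≤ ‖a‖ + ‖p‖ :=
  (norm_le_insert' b a).trans <| add_le_add le_rfl <|
    norm_sub_rev b a ▸ HasSolidNorm.solid (h.trans (le_abs_self p))

variable [IsOrderedAddMonoid F] [NormedSpace ℝ F]

/-- The dyadic multiples `⌊c 2ᵏ⌋₊ / 2ᵏ • v` of a positive `v` are positive, because positivity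
can be halved in a lattice-ordered group; they converge to `c • v` and the positive cone is
closed. -/
instance HasSolidNorm.posSMulMono_real : PosSMulMono ℝ F := by
  refine PosSMulMono.of_smul_nonneg fun c hc v hv => ?_
  have hdyadic : ∀ k : ℕ, 0 ≤ ((⌊c * 2 ^ k⌋₊ : ℝ) / 2 ^ k) • v := fun k => by
    refine nonneg_of_two_pow_nsmul_nonneg k ?_
    rw [← Nat.cast_smul_eq_nsmul ℝ, smul_smul, Nat.cast_pow, Nat.cast_ofNat,
      mul_div_cancel₀ _ (by positivity), Nat.cast_smul_eq_nsmul]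
    exact nsmul_nonneg hv _
  have hlim : Tendsto (fun k : ℕ => (⌊c * 2 ^ k⌋₊ : ℝ) / 2 ^ k) atTop (𝓝 c) :=
    (tendsto_nat_floor_mul_div_atTop hc).comp (tendsto_pow_atTop_atTop_of_one_lt one_lt_two)
  exact ge_of_tendsto (hlim.smul_const v) (Eventually.of_forall hdyadic)

theorem abs_smul_le_smul_abs {c : ℝ} (hc : 0 ≤ c) (v : F) : |c • v| ≤ c • |v| :=
  abs_le'.2 ⟨smul_le_smul_of_nonneg_left (le_abs_self v) hc,
    smul_neg c v ▸ smul_le_smul_of_nonneg_left (neg_le_abs v) hc⟩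

theorem abs_smul_le (c : ℝ) (v : F) : |c • v| ≤ |c| • |v| := by
  obtain ⟨w, hw, hcv⟩ : ∃ w : F, |w| = |v| ∧ c • v = |c| • w := by
    rcases abs_choice c with h | h
    · exact ⟨v, rfl, by rw [h]⟩
    · exact ⟨-v, abs_neg v, by rw [h, neg_smul_neg]⟩
  rw [hcv, ← hw]
  exact abs_smul_le_smul_abs (abs_nonneg c) w

theorem abs_le_of_hasSum_smul {ι : Type*} {α : ι → ℝ} {u : ι → F} {s p : F}
    (hs : HasSum (fun i => α i • u i) s) (hα : Summable fun i => |α i|)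
    (hα1 : ∑' i, |α i| ≤ 1) (hp : 0 ≤ p) (hu : ∀ i, |u i| ≤ p) : |s| ≤ p := by
  refine (isClosed_le (continuous_id.sup continuous_neg) continuous_const).mem_of_tendsto hs
    (Eventually.of_forall fun t => ?_)
  calc |∑ i ∈ t, α i • u i|
      ≤ ∑ i ∈ t, |α i • u i| := Finset.le_sum_of_subadditive _ abs_zero.le abs_add_le t _
    _ ≤ ∑ i ∈ t, |α i| • p := Finset.sum_le_sum fun i _ =>
        (abs_smul_le _ _).trans (smul_le_smul_of_nonneg_left (hu i) (abs_nonneg _))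
    _ = (∑ i ∈ t, |α i|) • p := Finset.sum_smul.symm
    _ ≤ p := smul_le_of_le_one_left hp
        ((hα.sum_le_tsum t fun i _ => abs_nonneg _).trans hα1)

end NormedLattice

theorem CollQuasiCLevi.of_forall_exists_dominated {E F : Type*} [NormedAddCommGroup E]
    [Lattice E] [IsOrderedAddMonoid E] [HasSolidNorm E] [NormedSpace ℝ E]
    [NormedAddCommGroup F] [Lattice F] [IsOrderedAddMonoid F] [HasSolidNorm F] [NormedSpace ℝ F]
    {A B : Set (E →L[ℝ] F)} (hA : CollQuasiCLevi A)
    (h : ∀ x : ℕ → E, IncBddPos x → ∀ (y : (E →L[ℝ] F) → F) (p : ℕ → F), DownToZero p →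
      (∀ T ∈ A, ∀ n, |T (x n) - y T| ≤ p n) → ∀ W ∈ B, ∃ z : F, ∀ n, |W (x n) - z| ≤ p n) :
    CollQuasiCLevi B := by
  intro x hx
  obtain ⟨y, p, hp, hyp⟩ := hA x hx
  choose! z hz using h x hx y p hp hyp
  exact ⟨z, p, hp, hz⟩

/-- if `A` is a norm-bounded collectively quasi-c-σ-Levi set of
operators from a normed lattice to a Banach lattice, then the set of all
operator-norm sums `Σ_i α_i T_i` with `T_i ∈ A` and `Σ_i |α_i| ≤ 1` is
collectively quasi-c-σ-Levi. -/
theorem coll_quasi_c_Levi_series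
    {E F : Type*} [NormedAddCommGroup E] [Lattice E] [IsOrderedAddMonoid E]
    [HasSolidNorm E] [NormedSpace ℝ E]
    [NormedAddCommGroup F] [Lattice F] [IsOrderedAddMonoid F]
    [HasSolidNorm F] [NormedSpace ℝ F] [CompleteSpace F]
    (A : Set (E →L[ℝ] F))
    (hbdd : ∃ M : ℝ, ∀ T ∈ A, ‖T‖ ≤ M)
    (hA : CollQuasiCLevi A) :
    CollQuasiCLevi {W : E →L[ℝ] F |
      ∃ (α : ℕ → ℝ) (T : ℕ → E →L[ℝ] F),
        (∀ i, T i ∈ A) ∧ (Summable fun i => |α i|) ∧ (∑' i, |α i|) ≤ 1 ∧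
        HasSum (fun i => α i • T i) W} := by
  obtain ⟨M, hM⟩ := hbdd
  refine hA.of_forall_exists_dominated fun x _ y p hp hyp => ?_
  have hp0 : ∀ n, 0 ≤ p n := fun n => hp.2.1 ⟨n, rfl⟩
  have hy : ∀ T ∈ A, ‖y T‖ ≤ M * ‖x 0‖ + ‖p 0‖ := fun T hT =>
    (norm_le_add_of_abs_sub_le (hyp T hT 0)).trans
      (add_le_add (T.le_of_opNorm_le (hM T hT) _) le_rfl)
  rintro W ⟨α, T, hT, hα, hα1, hW⟩
  have hαy : Summable fun i => α i • y (T i) :=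
    .of_norm_bounded (hα.mul_right _) fun i => by
      rw [norm_smul, Real.norm_eq_abs]
      exact mul_le_mul_of_nonneg_left (hy _ (hT i)) (abs_nonneg _)
  refine ⟨∑' i, α i • y (T i), fun n =>
    abs_le_of_hasSum_smul ?_ hα hα1 (hp0 n) fun i => hyp _ (hT i) n⟩
  simpa only [smul_sub, map_smul, ContinuousLinearMap.apply_apply] using
    (hW.mapL (ContinuousLinearMap.apply ℝ F (x n))).sub hαy.hasSum
end
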